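/- For the newsvendor surrogate net reward, the diagonal derivatives satisfy Π^{(2,0)}(τ|τ) = −n(c_u+c_o)φ(z_CR)/σ and Π^{(1,2)}(τ|τ) = n(c_u+c_o) z_CR φ(z_CR)/σ², both constant in τ; consequently the ratio −Π^{(1,2)}(τ|τ)/(2Π^{(2,0)}(τ|τ)) equals z_CR/(2σ), so the sign of the leading-order operational adjustment δ_n^o = ṽ z_CR/(2σ) equals the sign of z_CR (i.e., positive iff critical ratio exceeds 1/2). -/

import Mathlib

open Real MeasureTheory Set

/-- Standard normal pdf. -/
noncomputable def normalPdf (x : ℝ) : ℝ :=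
  (Real.sqrt (2 * Real.pi))⁻¹ * Real.exp (-(x ^ 2) / 2)

/-- Standard normal cdf. -/
noncomputable def normalCdf (x : ℝ) : ℝ := ∫ t in Set.Iic x, normalPdf t

lemma normalPdf_pos (x : ℝ) : 0 < normalPdf x := by
  unfold normalPdf; positivity

lemma continuous_normalPdf : Continuous normalPdf := by
  unfold normalPdf; fun_prop

lemma integrable_normalPdf : Integrable normalPdf := by
  have h := (integrable_exp_neg_mul_sq (by norm_num : (0:ℝ) < 1/2)).const_mul
    (Real.sqrt (2 * Real.pi))⁻¹
  refine h.congr (Filter.Eventually.of_forall fun x => ?_)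
  unfold normalPdf; ring_nf

lemma hasDerivAt_normalPdf (x : ℝ) :
    HasDerivAt normalPdf (-x * normalPdf x) x := by
  have h : HasDerivAt (fun y : ℝ => -(y ^ 2) / 2) (-x) x := by
    have := ((hasDerivAt_pow 2 x).neg).div_const 2
    refine this.congr_deriv ?_
    simp; ring
  have h2 := (h.exp).const_mul (Real.sqrt (2 * Real.pi))⁻¹
  refine h2.congr_deriv ?_
  unfold normalPdf; ring

lemma hasDerivAt_normalCdf (x : ℝ) :
    HasDerivAt normalCdf (normalPdf x) x := by
  have key : ∀ y : ℝ, normalCdf y = normalCdf 0 + ∫ t in (0:ℝ)..y, normalPdf t := by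
    intro y
    have := intervalIntegral.integral_Iic_sub_Iic
      (integrable_normalPdf.integrableOn (s := Iic 0))
      (integrable_normalPdf.integrableOn (s := Iic y))
    unfold normalCdf
    linarith [this]
  have hd : HasDerivAt (fun y => normalCdf 0 + ∫ t in (0:ℝ)..y, normalPdf t)
      (normalPdf x) x := by
    refine HasDerivAt.const_add _ ?_
    exact intervalIntegral.integral_hasDerivAt_right
      (integrable_normalPdf.intervalIntegrable)
      continuous_normalPdf.aestronglyMeasurable.stronglyMeasurableAtFilter
      continuous_normalPdf.continuousAt
  exact hd.congr_of_eventuallyEq (Filter.Eventually.of_forall key)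

lemma normalCdf_zero : normalCdf 0 = 1 / 2 := by
  have htot : ∫ x : ℝ, normalPdf x = 1 := by
    have hg : ∫ x : ℝ, Real.exp (-(1/2) * x ^ 2) = Real.sqrt (π / (1/2)) :=
      integral_gaussian (1/2)
    have heq : ∫ x : ℝ, normalPdf x
        = (Real.sqrt (2 * π))⁻¹ * ∫ x : ℝ, Real.exp (-(1/2) * x ^ 2) := by
      rw [← integral_const_mul]
      congr 1; ext x; unfold normalPdf; ring_nf
    rw [heq, hg]
    have h2 : π / (1/2) = 2 * π := by ring
    rw [h2]
    have : (0:ℝ) < Real.sqrt (2 * π) := Real.sqrt_pos.2 (by positivity)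
    field_simp
  have hsym : ∫ x in Iic (0:ℝ), normalPdf x = ∫ x in Ioi (0:ℝ), normalPdf x := by
    have h1 : ∫ x in Iic (0:ℝ), normalPdf (-x) = ∫ x in Ioi (-(0:ℝ)), normalPdf x :=
      integral_comp_neg_Iic 0 normalPdf
    have h2 : ∀ x : ℝ, normalPdf (-x) = normalPdf x := by
      intro x; unfold normalPdf; ring_nf
    simp only [h2, neg_zero] at h1
    exact h1
  have hsplit := intervalIntegral.integral_Iic_add_Ioi
    (integrable_normalPdf.integrableOn (s := Iic 0))
    (integrable_normalPdf.integrableOn (s := Ioi 0))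
  rw [htot] at hsplit
  unfold normalCdf
  linarith

lemma normalCdf_strictMono : StrictMono normalCdf := by
  intro a b hab
  have h := intervalIntegral.intervalIntegral_pos_of_pos
    (f := normalPdf) (integrable_normalPdf.intervalIntegrable) normalPdf_pos hab
  have h2 := intervalIntegral.integral_Iic_sub_Iic
    (integrable_normalPdf.integrableOn (s := Iic a))
    (integrable_normalPdf.integrableOn (s := Iic b))
  unfold normalCdf
  linarith

section derivs
variable {n p cu co σ zCR : ℝ} (hσ : σ ≠ 0)

lemma hz (t x : ℝ) : HasDerivAt (fun x : ℝ => zCR + (x - t) / σ) (1 / σ) x := by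
  have := (((hasDerivAt_id x).sub_const t).div_const σ).const_add zCR
  simpa using this

include hσ in
lemma hd1 (t x : ℝ) :
    HasDerivAt (fun x => n * (p * t
        - (cu + co) * σ * (normalPdf (zCR + (x - t) / σ) - normalPdf zCR)
        - (cu + co) * σ * (zCR + (x - t) / σ) * normalCdf (zCR + (x - t) / σ)
        + cu * σ * (zCR + (x - t) / σ)))
      (n * (cu - (cu + co) * normalCdf (zCR + (x - t) / σ))) x := by
  set z := zCR + (x - t) / σ with hzdef
  have hzx : HasDerivAt (fun x : ℝ => zCR + (x - t) / σ) (1 / σ) x := hz t x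
  have hpdf : HasDerivAt (fun x => normalPdf (zCR + (x - t) / σ))
      (-z * normalPdf z * (1 / σ)) x := HasDerivAt.comp (h₂ := normalPdf) x (hasDerivAt_normalPdf z) hzx
  have hcdf : HasDerivAt (fun x => normalCdf (zCR + (x - t) / σ))
      (normalPdf z * (1 / σ)) x := HasDerivAt.comp (h₂ := normalCdf) x (hasDerivAt_normalCdf z) hzx
  have h1 : HasDerivAt (fun x => p * t
      - (cu + co) * σ * (normalPdf (zCR + (x - t) / σ) - normalPdf zCR))
      (-((cu + co) * σ * (-z * normalPdf z * (1 / σ)))) x :=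
    ((hpdf.sub_const (normalPdf zCR)).const_mul ((cu + co) * σ)).const_sub (p * t)
  have h2 : HasDerivAt (fun x =>
      (cu + co) * σ * (zCR + (x - t) / σ) * normalCdf (zCR + (x - t) / σ))
      ((cu + co) * σ * ((1 / σ) * normalCdf z + z * (normalPdf z * (1 / σ)))) x := by
    have h := (hzx.mul hcdf).const_mul ((cu + co) * σ)
    simp only [← mul_assoc] at h
    have h' := h.congr_deriv
      (g' := (cu + co) * σ * ((1 / σ) * normalCdf z + z * (normalPdf z * (1 / σ)))) (by ring)
    exact h'.congr_of_eventuallyEq (Filter.Eventually.of_forall fun y => by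
      simp only [Pi.mul_apply]; ring)
  have h3 : HasDerivAt (fun x => cu * σ * (zCR + (x - t) / σ)) (cu * σ * (1 / σ)) x :=
    hzx.const_mul (cu * σ)
  have := ((h1.sub h2).add h3).const_mul n
  refine this.congr_deriv ?_
  field_simp
  ring

include hσ in
lemma hd2 (t x : ℝ) :
    HasDerivAt (fun x => n * (cu - (cu + co) * normalCdf (zCR + (x - t) / σ)))
      (-(n * (cu + co) * normalPdf (zCR + (x - t) / σ) / σ)) x := by
  have hcdf : HasDerivAt (fun x => normalCdf (zCR + (x - t) / σ))
      (normalPdf (zCR + (x - t) / σ) * (1 / σ)) x :=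
    (hasDerivAt_normalCdf _).comp x (hz t x)
  have := ((hcdf.const_mul (cu + co)).const_sub cu).const_mul n
  refine this.congr_deriv ?_
  field_simp

lemma hzt (τ t : ℝ) : HasDerivAt (fun t : ℝ => zCR + (τ - t) / σ) (-1 / σ) t := by
  have := (((hasDerivAt_id t).const_sub τ).div_const σ).const_add zCR
  simpa using this

include hσ in
lemma hg1 (τ t : ℝ) :
    HasDerivAt (fun t => n * (cu - (cu + co) * normalCdf (zCR + (τ - t) / σ)))
      (n * (cu + co) * normalPdf (zCR + (τ - t) / σ) / σ) t := by
  have hcdf : HasDerivAt (fun t => normalCdf (zCR + (τ - t) / σ))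
      (normalPdf (zCR + (τ - t) / σ) * (-1 / σ)) t :=
    (hasDerivAt_normalCdf _).comp t (hzt τ t)
  have := ((hcdf.const_mul (cu + co)).const_sub cu).const_mul n
  refine this.congr_deriv ?_
  field_simp

include hσ in
lemma hg2 (τ t : ℝ) :
    HasDerivAt (fun t => n * (cu + co) * normalPdf (zCR + (τ - t) / σ) / σ)
      (n * (cu + co) * (zCR + (τ - t) / σ) * normalPdf (zCR + (τ - t) / σ) / σ ^ 2) t := by
  have hpdf : HasDerivAt (fun t => normalPdf (zCR + (τ - t) / σ))
      (-(zCR + (τ - t) / σ) * normalPdf (zCR + (τ - t) / σ) * (-1 / σ)) t :=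
    (hasDerivAt_normalPdf _).comp t (hzt τ t)
  have := (hpdf.const_mul (n * (cu + co))).div_const σ
  refine this.congr_deriv ?_
  field_simp

end derivs

/-- Newsvendor diagonal derivatives and the sign of the operational
adjustment: `Π^{(2,0)}(τ|τ) = −n(c_u+c_o)φ(z_CR)/σ` and
`Π^{(1,2)}(τ|τ) = n(c_u+c_o)z_CR φ(z_CR)/σ²`, both constant in `τ`, so
`−Π^{(1,2)}(τ|τ)/(2Π^{(2,0)}(τ|τ)) = z_CR/(2σ)`; hence the leading-order
operational adjustment `δ_n^o = ṽ z_CR/(2σ)` is positive iff `z_CR > 0`, i.e.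
iff the critical ratio `c_u/(c_u+c_o)` exceeds `1/2`. -/
theorem newsvendor_diagonal_derivatives_and_adjustment_sign
    (n : ℕ) (hn : 1 ≤ n) (p cu co σ zCR vtil : ℝ)
    (hp : 0 < p) (hcu : 0 < cu) (hco : 0 < co) (hσ : 0 < σ) (hvtil : 0 < vtil)
    (hzCR : normalCdf zCR = cu / (cu + co))
    (Pi : ℝ → ℝ → ℝ)
    (hPi : ∀ x t, Pi x t =
      (n : ℝ) * (p * t
        - (cu + co) * σ * (normalPdf (zCR + (x - t) / σ) - normalPdf zCR)
        - (cu + co) * σ * (zCR + (x - t) / σ) * normalCdf (zCR + (x - t) / σ)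
        + cu * σ * (zCR + (x - t) / σ))) :
    (∀ τ : ℝ, iteratedDeriv 2 (fun x => Pi x τ) τ
        = -(n : ℝ) * (cu + co) * normalPdf zCR / σ) ∧
    (∀ τ : ℝ, iteratedDeriv 2 (fun t => deriv (fun x => Pi x t) τ) τ
        = (n : ℝ) * (cu + co) * zCR * normalPdf zCR / σ ^ 2) ∧
    (∀ τ : ℝ,
      -(iteratedDeriv 2 (fun t => deriv (fun x => Pi x t) τ) τ)
        / (2 * iteratedDeriv 2 (fun x => Pi x τ) τ) = zCR / (2 * σ)) ∧
    (0 < vtil * zCR / (2 * σ) ↔ 1 / 2 < cu / (cu + co)) := by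
  have hσ' : σ ≠ 0 := ne_of_gt hσ
  have c1 : ∀ τ : ℝ, iteratedDeriv 2 (fun x => Pi x τ) τ
      = -(n : ℝ) * (cu + co) * normalPdf zCR / σ := by
    intro τ
    have e1 : (fun x => Pi x τ) = (fun x => (n : ℝ) * (p * τ
        - (cu + co) * σ * (normalPdf (zCR + (x - τ) / σ) - normalPdf zCR)
        - (cu + co) * σ * (zCR + (x - τ) / σ) * normalCdf (zCR + (x - τ) / σ)
        + cu * σ * (zCR + (x - τ) / σ))) := funext fun x => hPi x τ
    rw [e1, iteratedDeriv_succ, iteratedDeriv_one]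
    have ed : deriv (fun x => (n : ℝ) * (p * τ
        - (cu + co) * σ * (normalPdf (zCR + (x - τ) / σ) - normalPdf zCR)
        - (cu + co) * σ * (zCR + (x - τ) / σ) * normalCdf (zCR + (x - τ) / σ)
        + cu * σ * (zCR + (x - τ) / σ)))
        = fun x => (n : ℝ) * (cu - (cu + co) * normalCdf (zCR + (x - τ) / σ)) :=
      funext fun x => (hd1 hσ' τ x).deriv
    rw [ed, (hd2 hσ' τ τ).deriv]
    simp only [sub_self, zero_div, add_zero]
    ring
  have c2 : ∀ τ : ℝ, iteratedDeriv 2 (fun t => deriv (fun x => Pi x t) τ) τ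
      = (n : ℝ) * (cu + co) * zCR * normalPdf zCR / σ ^ 2 := by
    intro τ
    have eg : (fun t => deriv (fun x => Pi x t) τ)
        = fun t => (n : ℝ) * (cu - (cu + co) * normalCdf (zCR + (τ - t) / σ)) := by
      funext t
      have e : (fun x => Pi x t) = (fun x => (n : ℝ) * (p * t
          - (cu + co) * σ * (normalPdf (zCR + (x - t) / σ) - normalPdf zCR)
          - (cu + co) * σ * (zCR + (x - t) / σ) * normalCdf (zCR + (x - t) / σ)
          + cu * σ * (zCR + (x - t) / σ))) := funext fun x => hPi x t
      rw [e]
      exact (hd1 hσ' t τ).deriv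
    rw [eg, iteratedDeriv_succ, iteratedDeriv_one]
    have ed : deriv (fun t => (n : ℝ) * (cu - (cu + co) * normalCdf (zCR + (τ - t) / σ)))
        = fun t => (n : ℝ) * (cu + co) * normalPdf (zCR + (τ - t) / σ) / σ :=
      funext fun t => (hg1 hσ' τ t).deriv
    rw [ed, (hg2 hσ' τ τ).deriv]
    simp only [sub_self, zero_div, add_zero]
  have hn' : (n : ℝ) ≠ 0 := by positivity
  have hcc : cu + co ≠ 0 := by positivity
  have hφ : normalPdf zCR ≠ 0 := (normalPdf_pos zCR).ne'
  refine ⟨c1, c2, fun τ => ?_, ?_⟩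
  · rw [c1 τ, c2 τ]
    field_simp
  · have hzpos : (0 < zCR) ↔ (1 / 2 < cu / (cu + co)) := by
      rw [← hzCR, ← normalCdf_zero]
      exact ⟨fun h => normalCdf_strictMono h, fun h => normalCdf_strictMono.lt_iff_lt.mp h⟩
    rw [← hzpos]
    constructor
    · intro h
      by_contra hc
      push_neg at hc
      have : vtil * zCR ≤ 0 := mul_nonpos_of_nonneg_of_nonpos hvtil.le hc
      have h2σ : 0 < 2 * σ := by positivity
      nlinarith [div_nonpos_of_nonpos_of_nonneg this h2σ.le]
    · intro h
      positivity
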